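/- Let (m_1,…,m_r) be a tuple of positive integers with m = lcm(m_1,…,m_r). Then E(m_1,…,m_r) = φ(m) if and only if for every prime p dividing m, the multiset A_p of positive exponents {a_j(p) : a_j(p) ≥ 1} satisfies one of the following: (i) A_p consists of exactly two elements, both equal to a(p); or (ii) p = 3 and A_3 = {1,1,1}; or (iii) p = 2 and A_2 consists of two elements equal to a(2) together with r(2)−2 elements equal to 1, where a(2) ≥ 1, r(2) = |A_2| ≥ 3, and r(2) is even in case a(2) = 1. -/

import Mathlib

/-- The von Sterneck function `Φ(k,n) = μ(n/gcd(k,n)) * φ(n) / φ(n/gcd(k,n))`. -/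
noncomputable def vonSterneck (k n : ℕ) : ℚ :=
  (ArithmeticFunction.moebius (n / Nat.gcd k n) : ℚ) * (Nat.totient n : ℚ) /
    (Nat.totient (n / Nat.gcd k n) : ℚ)

/-- The orbicyclic function `E(m_1,…,m_r)`. -/
noncomputable def orbE {r : ℕ} (m : Fin r → ℕ) : ℚ :=
  (∑ k ∈ Finset.Icc 1 (Finset.univ.lcm m), ∏ j, vonSterneck k (m j)) /
    ((Finset.univ.lcm m : ℕ) : ℚ)

/-- The polynomial `h_s(x) = ((x-1)^(s-1) + (-1)^s)/x`. -/
noncomputable def hpoly (s : ℕ) (x : ℚ) : ℚ := ((x - 1) ^ (s - 1) + (-1) ^ s) / x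

/-- The multiset of positive exponents `a_j(p) ≥ 1` of a prime `p` in the arguments `m_j`. -/
def posExps {r : ℕ} (m : Fin r → ℕ) (p : ℕ) : Multiset ℕ :=
  Multiset.filter (fun e => 1 ≤ e) (Multiset.map (fun j => (m j).factorization p) Finset.univ.val)

/-!
`Φ(k, ·)` is multiplicative and `Φ(·, n)` depends only on `gcd(k, n)`, so by the Chinese remainder
theorem `E(m) = φ(m) · ∏_{p ∣ m} L_p` with one local factor per prime. Writing `a = a(p)` and
`s` for the number of `j` with `a_j(p) = a`, only the `k` divisible by `p^(a-1)` contribute to the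
local sum, and `L_p = ∏_{1 ≤ a_j(p) < a} φ(p^{a_j(p)}) · p^((a-1)(s-2)) · h_s(p)`.
Every `L_p` is `0` or at least `1`, so `E(m) = φ(m)` iff every `L_p = 1`: all exponents below `a`
are `1` with `p = 2`, `a = 1` or `s ≤ 2`, and `h_s(p) = 1`, which happens only for `s = 2`, for
`(p, s) = (3, 3)` and for `p = 2` with `s` even.
-/

open Finset Function

lemma Function.Periodic.sum_Icc_one_eq_sum_range {M : Type*} [AddCommMonoid M] {f : ℕ → M}
    {N : ℕ} (hf : Periodic f N) : ∑ k ∈ Icc 1 N, f k = ∑ k ∈ range N, f k := by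
  rcases Nat.eq_zero_or_pos N with rfl | hN
  · simp
  rw [sum_range_eq_add_Ico _ hN, ← Ico_add_one_right_eq_Icc, sum_Ico_succ_top hN, hf.eq, add_comm]

lemma sum_range_mul_eq_sum_mul_sum_of_periodic {R : Type*} [CommSemiring R] {u v : ℕ}
    (h : u.Coprime v) {f g : ℕ → R} (hf : Periodic f u) (hg : Periodic g v) :
    ∑ k ∈ range (u * v), f k * g k = (∑ k ∈ range u, f k) * ∑ k ∈ range v, g k := by
  rw [sum_mul_sum, ← sum_product']
  refine sum_nbij' (fun k => (k % u, k % v)) (fun x => Nat.chineseRemainder h x.1 x.2)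
    ?_ ?_ ?_ ?_ ?_
  · intro k hk
    simp only [mem_range, mem_product] at hk ⊢
    have huv : 0 < u * v := by omega
    exact ⟨Nat.mod_lt _ (Nat.pos_of_mul_pos_right huv), Nat.mod_lt _ (Nat.pos_of_mul_pos_left huv)⟩
  · intro x hx
    simp only [mem_range, mem_product] at hx ⊢
    exact Nat.chineseRemainder_lt_mul h _ _ (by omega) (by omega)
  · intro k hk
    simp only [mem_range] at hk
    refine (Nat.chineseRemainder_modEq_unique h (Nat.mod_modEq k u).symm
      (Nat.mod_modEq k v).symm).symm.eq_of_lt_of_lt ?_ hk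
    exact Nat.chineseRemainder_lt_mul h _ _ (by rintro rfl; simp at hk) (by rintro rfl; simp at hk)
  · intro x hx
    simp only [mem_range, mem_product] at hx
    have hcr := (Nat.chineseRemainder h x.1 x.2).prop
    simp only [Prod.ext_iff]
    exact ⟨by rw [hcr.1, Nat.mod_eq_of_lt hx.1], by rw [hcr.2, Nat.mod_eq_of_lt hx.2]⟩
  · intro k _
    rw [hf.map_mod_nat, hg.map_mod_nat]

lemma sum_range_prod_eq_prod_sum_range_of_periodic {R ι : Type*} [CommSemiring R] (s : Finset ι)
    {q : ι → ℕ} (hq : (s : Set ι).Pairwise (Nat.Coprime on q)) {F : ι → ℕ → R}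
    (hF : ∀ i ∈ s, Periodic (F i) (q i)) :
    ∑ k ∈ range (∏ i ∈ s, q i), ∏ i ∈ s, F i k = ∏ i ∈ s, ∑ k ∈ range (q i), F i k := by
  induction s using Finset.cons_induction with
  | empty => simp
  | cons a s ha ih =>
    rw [coe_cons, Set.pairwise_insert] at hq
    have hF' : ∀ i ∈ s, Periodic (F i) (q i) := fun i hi => hF i (mem_cons_of_mem hi)
    have hper : Periodic (fun k => ∏ i ∈ s, F i k) (∏ i ∈ s, q i) := fun k =>
      prod_congr rfl fun i hi => by
        obtain ⟨c, hc⟩ := dvd_prod_of_mem q hi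
        rw [hc, mul_comm]
        exact (hF' i hi).nat_mul c k
    have hcop : (q a).Coprime (∏ i ∈ s, q i) :=
      Nat.Coprime.prod_right fun i hi => (hq.2 i hi fun h => ha (h ▸ hi)).1
    simp only [prod_cons]
    rw [sum_range_mul_eq_sum_mul_sum_of_periodic hcop (hF a (mem_cons_self a s)) hper, ih hq.1 hF']

lemma sum_range_mul_eq_sum_range_of_not_dvd {M : Type*} [AddCommMonoid M] {f : ℕ → M}
    {d : ℕ} (hd : d ≠ 0) (hf : ∀ k, ¬ d ∣ k → f k = 0) (n : ℕ) :
    ∑ k ∈ range (n * d), f k = ∑ u ∈ range n, f (u * d) := by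
  rw [← sum_image fun x _ y _ h => Nat.eq_of_mul_eq_mul_right (Nat.pos_of_ne_zero hd) h]
  refine (sum_subset (fun k hk => ?_) fun k hk hk' => hf k ?_).symm
  · obtain ⟨u, hu, rfl⟩ := mem_image.mp hk
    exact mem_range.mpr (Nat.mul_lt_mul_of_pos_right (mem_range.mp hu) (Nat.pos_of_ne_zero hd))
  · rintro ⟨c, rfl⟩
    rw [mem_range, mul_comm n] at hk
    exact hk' (mem_image.mpr ⟨c, mem_range.mpr (Nat.lt_of_mul_lt_mul_left hk), mul_comm c d⟩)

lemma Multiset.prod_map_eq_pow_count_mul {α M : Type*} [DecidableEq α] [CommMonoid M]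
    (s : Multiset α) (g : α → M) (a : α) :
    (s.map g).prod = g a ^ s.count a * ((s.filter (· ≠ a)).map g).prod := by
  conv_lhs => rw [← s.filter_add_not (· = a)]
  rw [Multiset.map_add, Multiset.prod_add, Multiset.filter_eq', Multiset.map_replicate,
    Multiset.prod_replicate]

lemma Multiset.prod_map_eq_one_iff {α M : Type*} [CommMonoid M] [Subsingleton Mˣ]
    (s : Multiset α) (f : α → M) : (s.map f).prod = 1 ↔ ∀ x ∈ s, f x = 1 := by
  induction s using Multiset.induction <;> simp [*]

lemma Nat.factorization_finset_lcm {ι : Type*} {s : Finset ι} {f : ι → ℕ}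
    (hf : ∀ i ∈ s, f i ≠ 0) (p : ℕ) :
    (s.lcm f).factorization p = s.sup fun i => (f i).factorization p := by
  induction s using Finset.cons_induction with
  | empty => simp
  | cons a s ha ih =>
    have hs : s.lcm f ≠ 0 := Finset.lcm_ne_zero_iff.mpr fun i hi => hf i (mem_cons_of_mem hi)
    classical
    rw [cons_eq_insert, lcm_insert, sup_insert, ← ih fun i hi => hf i (mem_cons_of_mem hi)]
    exact congrArg (· p) (Nat.factorization_lcm (hf a (mem_cons_self a s)) hs)

lemma totient_eq_prod_primeFactors {n : ℕ} (hn : n ≠ 0) :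
    n.totient = ∏ p ∈ n.primeFactors, (p ^ n.factorization p).totient := by
  rw [Nat.multiplicative_factorization _ (fun _ _ => Nat.totient_mul) Nat.totient_one hn,
    Nat.prod_factorization_eq_prod_primeFactors]

section ZeroOrOneLe

variable {R : Type*} [CommRing R] [LinearOrder R] [IsStrictOrderedRing R]

lemma mul_eq_zero_or_one_le {x y : R} (hx : x = 0 ∨ 1 ≤ x) (hy : y = 0 ∨ 1 ≤ y) :
    x * y = 0 ∨ 1 ≤ x * y := by
  rcases hx with rfl | hx
  · simp
  rcases hy with rfl | hy
  · simp
  exact Or.inr (one_le_mul_of_one_le_of_one_le hx hy)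

lemma mul_eq_one_iff_of_zero_or_one_le {x y : R} (hx : x = 0 ∨ 1 ≤ x) (hy : y = 0 ∨ 1 ≤ y) :
    x * y = 1 ↔ x = 1 ∧ y = 1 := by
  refine ⟨fun h => ?_, fun h => by simp [h]⟩
  rcases hx with rfl | hx
  · simp at h
  rcases hy with rfl | hy
  · simp at h
  constructor <;> nlinarith

lemma prod_eq_one_iff_of_zero_or_one_le {ι : Type*} (s : Finset ι) {f : ι → R}
    (hf : ∀ i ∈ s, f i = 0 ∨ 1 ≤ f i) : ∏ i ∈ s, f i = 1 ↔ ∀ i ∈ s, f i = 1 := by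
  induction s using Finset.cons_induction with
  | empty => simp
  | cons a s ha ih =>
    have hs : ∀ i ∈ s, f i = 0 ∨ 1 ≤ f i := fun i hi => hf i (mem_cons_of_mem hi)
    have hprod : ∏ i ∈ s, f i = 0 ∨ 1 ≤ ∏ i ∈ s, f i := prod_induction f (fun x => x = 0 ∨ 1 ≤ x)
      (fun _ _ => mul_eq_zero_or_one_le) (Or.inr le_rfl) hs
    rw [prod_cons, mul_eq_one_iff_of_zero_or_one_le (hf a (mem_cons_self a s)) hprod, ih hs,
      forall_mem_cons]

end ZeroOrOneLe

lemma Nat.cast_eq_zero_or_one_le {R : Type*} [Semiring R] [PartialOrder R] [IsOrderedRing R]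
    (n : ℕ) : (n : R) = 0 ∨ 1 ≤ (n : R) := by
  rcases n.eq_zero_or_pos with rfl | hn
  · exact Or.inl Nat.cast_zero
  · exact Or.inr (by simpa using Nat.mono_cast (α := R) hn)

lemma vonSterneck_congr_gcd {k l n : ℕ} (h : k.gcd n = l.gcd n) :
    vonSterneck k n = vonSterneck l n := by
  rw [vonSterneck, vonSterneck, h]

lemma vonSterneck_of_dvd {k n : ℕ} (h : n ∣ k) : vonSterneck k n = n.totient := by
  rcases eq_or_ne n 0 with rfl | hn
  · simp [vonSterneck]
  · simp [vonSterneck, Nat.gcd_eq_right h, Nat.div_self (Nat.pos_of_ne_zero hn)]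

lemma vonSterneck_one_right (k : ℕ) : vonSterneck k 1 = 1 := by
  simp [vonSterneck_of_dvd (one_dvd k)]

lemma vonSterneck_periodic {n N : ℕ} (h : n ∣ N) : Periodic (vonSterneck · n) N := by
  obtain ⟨c, rfl⟩ := h
  exact fun k => vonSterneck_congr_gcd (Nat.gcd_add_right_left_of_dvd k (dvd_mul_right n c))

lemma vonSterneck_mul (k : ℕ) {u v : ℕ} (h : u.Coprime v) :
    vonSterneck k (u * v) = vonSterneck k u * vonSterneck k v := by
  rcases eq_or_ne u 0 with rfl | hu
  · simp [(Nat.coprime_zero_left v).mp h, vonSterneck_one_right]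
  rcases eq_or_ne v 0 with rfl | hv
  · simp [(Nat.coprime_zero_right u).mp h, vonSterneck_one_right]
  have hgu := Nat.gcd_dvd_right k u
  have hgv := Nat.gcd_dvd_right k v
  have hcop : (u / k.gcd u).Coprime (v / k.gcd v) :=
    (h.coprime_dvd_left (Nat.div_dvd_of_dvd hgu)).coprime_dvd_right (Nat.div_dvd_of_dvd hgv)
  have htot : ∀ {n}, n ≠ 0 → ((n / k.gcd n).totient : ℚ) ≠ 0 := fun hn => by
    have := Nat.div_pos (Nat.gcd_le_right _ (Nat.pos_of_ne_zero hn))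
      (Nat.gcd_pos_of_pos_right k (Nat.pos_of_ne_zero hn))
    positivity
  rw [vonSterneck, vonSterneck, vonSterneck, Nat.Coprime.gcd_mul k h,
    ← Nat.div_mul_div_comm hgu hgv,
    ArithmeticFunction.isMultiplicative_moebius.map_mul_of_coprime hcop,
    Nat.totient_mul h, Nat.totient_mul hcop]
  field_simp [htot hu, htot hv]
  push_cast
  ring

lemma vonSterneck_eq_prod_primePow (k : ℕ) {n : ℕ} (hn : n ≠ 0) {P : Finset ℕ}
    (hP : n.primeFactors ⊆ P) :
    vonSterneck k n = ∏ p ∈ P, vonSterneck k (p ^ n.factorization p) := by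
  rw [Nat.multiplicative_factorization (vonSterneck k) (fun _ _ => vonSterneck_mul k)
      (vonSterneck_one_right k) hn,
    Finsupp.prod_of_support_subset _ (Nat.support_factorization n ▸ hP) _
      (fun _ _ => by simp [vonSterneck_one_right])]

lemma vonSterneck_primePow_eq_zero {p a k : ℕ} (hp : p.Prime) (hk : ¬ p ^ (a - 1) ∣ k) :
    vonSterneck k (p ^ a) = 0 := by
  obtain ⟨c, hca, hc⟩ := (Nat.dvd_prime_pow hp).mp (Nat.gcd_dvd_right k (p ^ a))
  have hc2 : c + 2 ≤ a := by
    by_contra hlt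
    exact hk ((pow_dvd_pow p (by omega)).trans (hc ▸ Nat.gcd_dvd_left k (p ^ a)))
  rw [vonSterneck, hc, Nat.pow_div hca hp.pos,
    ArithmeticFunction.moebius_apply_prime_pow hp (by omega), if_neg (by omega)]
  simp

lemma vonSterneck_primePow_of_gcd_eq {p a k : ℕ} (hp : p.Prime) (ha : 1 ≤ a)
    (hk : k.gcd (p ^ a) = p ^ (a - 1)) :
    vonSterneck k (p ^ a) = -(p : ℚ) ^ (a - 1) := by
  rw [vonSterneck, hk, Nat.pow_div (by omega) hp.pos, show a - (a - 1) = 1 by omega, pow_one,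
    ArithmeticFunction.moebius_apply_prime hp, Nat.totient_prime_pow hp (by omega),
    Nat.totient_prime hp]
  have : (p : ℚ) - 1 ≠ 0 := sub_ne_zero.mpr (by exact_mod_cast hp.one_lt.ne')
  push_cast [Nat.cast_sub hp.one_le]
  field_simp

lemma vonSterneck_mul_primePow_pred {p a u x : ℕ} (hp : p.Prime) (ha : 1 ≤ a) (hu : u ≠ 0)
    (hup : u < p) (hx : x ≤ a) :
    vonSterneck (u * p ^ (a - 1)) (p ^ x) =
      if x = a then -(p : ℚ) ^ (a - 1) else ((p ^ x).totient : ℚ) := by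
  split_ifs with hxa
  · subst hxa
    refine vonSterneck_primePow_of_gcd_eq hp ha ?_
    rw [← mul_pow_sub_one (by omega : x ≠ 0) p, mul_comm u, mul_comm p, Nat.gcd_mul_left,
      (Nat.coprime_of_lt_prime hu hup hp).symm.gcd_eq_one, mul_one]
  · exact vonSterneck_of_dvd ((pow_dvd_pow p (by omega)).trans (dvd_mul_left _ u))

lemma hpoly_succ_natCast_succ (q t : ℕ) :
    hpoly (t + 1) (q + 1 : ℕ) = (q ^ t - (-1) ^ t) / (q + 1) := by
  rw [hpoly, Nat.add_sub_cancel, pow_succ]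
  push_cast
  ring

lemma hpoly_eq_zero_or_one_le {p s : ℕ} (hp : 2 ≤ p) (hs : 1 ≤ s) :
    hpoly s p = 0 ∨ 1 ≤ hpoly s p := by
  obtain ⟨q, rfl⟩ : ∃ q, p = q + 1 := ⟨p - 1, by omega⟩
  obtain ⟨t, rfl⟩ : ∃ t, s = t + 1 := ⟨s - 1, by omega⟩
  have hq : (1 : ℚ) ≤ q := by exact_mod_cast (by omega : 1 ≤ q)
  rw [hpoly_succ_natCast_succ, le_div_iff₀ (by positivity), one_mul, div_eq_zero_iff]
  rcases Nat.even_or_odd t with ht | ht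
  · rw [ht.neg_one_pow]
    rcases Nat.eq_zero_or_pos t with rfl | ht0
    · simp
    rcases (by omega : q = 1 ∨ 2 ≤ q) with rfl | hq2
    · simp
    have hq2' : (2 : ℚ) ≤ q := by exact_mod_cast hq2
    have : q ^ 2 ≤ (q : ℚ) ^ t := pow_le_pow_right₀ hq (by obtain ⟨k, rfl⟩ := ht; omega)
    right
    nlinarith
  · rw [ht.neg_one_pow]
    have := le_self_pow₀ hq (by rintro rfl; simp at ht : t ≠ 0)
    right
    linarith

lemma hpoly_eq_one_iff {p s : ℕ} (hp : 2 ≤ p) (hs : 1 ≤ s) :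
    hpoly s p = 1 ↔ s = 2 ∨ (p = 3 ∧ s = 3) ∨ (p = 2 ∧ Even s) := by
  obtain ⟨q, rfl⟩ : ∃ q, p = q + 1 := ⟨p - 1, by omega⟩
  obtain ⟨t, rfl⟩ : ∃ t, s = t + 1 := ⟨s - 1, by omega⟩
  rw [hpoly_succ_natCast_succ, div_eq_one_iff_eq (by positivity), Nat.even_add_one]
  simp only [Nat.reduceEqDiff]
  rcases Nat.even_or_odd t with ht | ht
  · rw [ht.neg_one_pow, sub_eq_iff_eq_add, show (q : ℚ) + 1 + 1 = (q + 2 : ℕ) by push_cast; ring,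
      ← Nat.cast_pow, Nat.cast_inj]
    simp only [ht, not_true_eq_false, and_false, or_false]
    have ht1 : t ≠ 1 := by rintro rfl; exact Nat.not_even_one ht
    refine ⟨fun h => ?_, by rintro (h | ⟨rfl, rfl⟩) <;> simp_all⟩
    obtain ⟨k, rfl⟩ := ht
    rcases k with _ | _ | k
    · simp at h
    · rw [show 0 + 1 + (0 + 1) = 2 from rfl, sq] at h
      exact Or.inr ⟨by nlinarith, rfl⟩
    · rcases (by omega : q = 0 ∨ q = 1 ∨ 2 ≤ q) with rfl | rfl | hq
      · simp at h
      · simp at h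
      have : q ^ 4 ≤ q ^ (k + 1 + 1 + (k + 1 + 1)) := Nat.pow_le_pow_right (by omega) (by omega)
      nlinarith [Nat.pow_le_pow_left hq 3, pow_succ q 3]
  · rw [ht.neg_one_pow, sub_neg_eq_add, add_left_inj, ← Nat.cast_pow, Nat.cast_inj]
    have ht2 : t ≠ 2 := by rintro rfl; exact Nat.not_odd_iff_even.mpr even_two ht
    rcases (by omega : q = 1 ∨ 2 ≤ q) with rfl | hq
    · exact ⟨fun _ => Or.inr (Or.inr ⟨rfl, Nat.not_even_iff_odd.mpr ht⟩), fun _ => one_pow t⟩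
    rw [Nat.pow_eq_self_iff hq]
    omega

lemma totient_primePow_pow_add {p a s : ℕ} (hp : p.Prime) (ha : 1 ≤ a) (hs : 1 ≤ s) :
    ((p ^ a).totient : ℚ) ^ s + (p - 1) * (-(p : ℚ) ^ (a - 1)) ^ s =
      p ^ a * (p ^ a).totient * p ^ ((a - 1) * (s - 2)) * hpoly s p := by
  obtain ⟨b, rfl⟩ : ∃ b, a = b + 1 := ⟨a - 1, by omega⟩
  have hphi : ((p ^ (b + 1)).totient : ℚ) = (p - 1) * p ^ b := by
    rw [Nat.totient_prime_pow_succ hp]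
    push_cast [Nat.cast_sub hp.one_le]
    ring
  have hp0 : (p : ℚ) ≠ 0 := by exact_mod_cast hp.ne_zero
  rw [hphi, hpoly, Nat.add_sub_cancel]
  obtain rfl | ⟨t, rfl⟩ : s = 1 ∨ ∃ t, s = t + 2 := by
    rcases s with _ | _ | t <;> simp_all
  · simp
  · rw [show t + 2 - 1 = t + 1 by omega, Nat.add_sub_cancel, mul_pow, neg_pow, pow_mul]
    field_simp
    ring

lemma totient_primePow_eq_one_iff {p x : ℕ} (hp : p.Prime) (hx : x ≠ 0) :
    (p ^ x).totient = 1 ↔ p = 2 ∧ x = 1 := by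
  simp [Nat.totient_eq_one_iff, Nat.prime_two.pow_eq_iff, hp.ne_one, hx]

lemma sum_range_prod_vonSterneck_primePow {p a : ℕ} (hp : p.Prime) (ha : 1 ≤ a)
    {A : Multiset ℕ} (hA : ∀ x ∈ A, x ≤ a) (haA : a ∈ A) :
    ∑ k ∈ range (p ^ a), (A.map fun x => vonSterneck k (p ^ x)).prod =
      (A.map fun x => ((p ^ x).totient : ℚ)).prod +
        (p - 1) * (A.map fun x => if x = a then -(p : ℚ) ^ (a - 1) else (p ^ x).totient).prod := by
  have hvanish : ∀ k, ¬ p ^ (a - 1) ∣ k → (A.map fun x => vonSterneck k (p ^ x)).prod = 0 :=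
    fun k hk => Multiset.prod_eq_zero
      (Multiset.mem_map.mpr ⟨a, haA, vonSterneck_primePow_eq_zero hp hk⟩)
  obtain ⟨q, hq⟩ : ∃ q, p = q + 1 := ⟨p - 1, by have := hp.pos; omega⟩
  rw [← mul_pow_sub_one (by omega : a ≠ 0) p,
    sum_range_mul_eq_sum_range_of_not_dvd (pow_ne_zero _ hp.ne_zero) hvanish, hq,
    sum_range_succ', ← hq]
  have hunit : ∀ i ∈ range q, (A.map fun x => vonSterneck ((i + 1) * p ^ (a - 1)) (p ^ x)).prod =
      (A.map fun x => if x = a then -(p : ℚ) ^ (a - 1) else (p ^ x).totient).prod :=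
    fun i hi => congrArg _ (Multiset.map_congr rfl fun x hx =>
      vonSterneck_mul_primePow_pred hp ha i.succ_ne_zero (by simp at hi; omega) (hA x hx))
  rw [sum_congr rfl hunit, sum_const, card_range, nsmul_eq_mul, zero_mul]
  simp only [vonSterneck_of_dvd (dvd_zero _)]
  rw [hq]
  push_cast
  ring

/-- `L_p` with `a = a(p)` and `A = A_p`. When `A.count a = 1` the truncated exponent
`A.count a - 2` is harmless, since `h_1 = 0`. -/
noncomputable def localFactor (p a : ℕ) (A : Multiset ℕ) : ℚ :=
  (((A.filter (· ≠ a)).map fun x => (p ^ x).totient).prod * p ^ ((a - 1) * (A.count a - 2)) : ℕ) *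
    hpoly (A.count a) p

lemma sum_range_prod_vonSterneck_primePow_eq_localFactor {p a : ℕ} (hp : p.Prime) (ha : 1 ≤ a)
    {A : Multiset ℕ} (hA : ∀ x ∈ A, x ≤ a) (haA : a ∈ A) :
    ∑ k ∈ range (p ^ a), (A.map fun x => vonSterneck k (p ^ x)).prod =
      p ^ a * (p ^ a).totient * localFactor p a A := by
  have hne : (A.filter (· ≠ a)).map (fun x => if x = a then -(p : ℚ) ^ (a - 1) else (p ^ x).totient)
      = (A.filter (· ≠ a)).map fun x => ((p ^ x).totient : ℚ) :=
    Multiset.map_congr rfl fun x hx => if_neg (Multiset.mem_filter.mp hx).2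
  rw [sum_range_prod_vonSterneck_primePow hp ha hA haA,
    Multiset.prod_map_eq_pow_count_mul A (fun x => ((p ^ x).totient : ℚ)) a,
    Multiset.prod_map_eq_pow_count_mul A (fun x => if x = a then _ else _) a, if_pos rfl, hne,
    localFactor, Nat.cast_mul,
    Nat.cast_multiset_prod, Multiset.map_map, Function.comp_def]
  push_cast
  linear_combination ((A.filter (· ≠ a)).map fun x => ((p ^ x).totient : ℚ)).prod *
    totient_primePow_pow_add hp ha (Multiset.count_pos.mpr haA)

lemma localFactor_eq_zero_or_one_le {p a : ℕ} {A : Multiset ℕ} (hp : p.Prime) (haA : a ∈ A) :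
    localFactor p a A = 0 ∨ 1 ≤ localFactor p a A :=
  mul_eq_zero_or_one_le (Nat.cast_eq_zero_or_one_le _)
    (hpoly_eq_zero_or_one_le hp.two_le (Multiset.count_pos.mpr haA))

lemma localFactor_eq_one_iff_count {p a : ℕ} {A : Multiset ℕ} (hp : p.Prime) (hA : ∀ x ∈ A, 1 ≤ x)
    (ha : 1 ≤ a) (haA : a ∈ A) :
    localFactor p a A = 1 ↔ (∀ x ∈ A, x ≠ a → p = 2 ∧ x = 1) ∧ (a = 1 ∨ A.count a ≤ 2) ∧
      (A.count a = 2 ∨ (p = 3 ∧ A.count a = 3) ∨ (p = 2 ∧ Even (A.count a))) := by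
  have hs := Multiset.count_pos.mpr haA
  rw [localFactor, mul_eq_one_iff_of_zero_or_one_le (Nat.cast_eq_zero_or_one_le _)
      (hpoly_eq_zero_or_one_le hp.two_le hs), Nat.cast_eq_one, mul_eq_one,
    Multiset.prod_map_eq_one_iff, Nat.pow_eq_one, hpoly_eq_one_iff hp.two_le hs]
  simp only [Multiset.mem_filter, and_imp, hp.ne_one, false_or, Nat.mul_eq_zero, and_assoc]
  refine and_congr (forall₂_congr fun x hx => imp_congr_right fun _ =>
    totient_primePow_eq_one_iff hp (by have := hA x hx; omega)) (and_congr_left' ?_)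
  omega

section Shape

open Multiset

variable {p a : ℕ} {A : Multiset ℕ}

lemma replicate_shape_of_count_conditions (haA : a ∈ A) (hB : ∀ x ∈ A, x ≠ a → p = 2 ∧ x = 1)
    (hexp : a = 1 ∨ A.count a ≤ 2)
    (hcount : A.count a = 2 ∨ (p = 3 ∧ A.count a = 3) ∨ (p = 2 ∧ Even (A.count a))) :
    A = replicate 2 a ∨ (p = 3 ∧ A = replicate 3 1) ∨
      (p = 2 ∧ A = replicate 2 a + replicate (card A - 2) 1 ∧ 3 ≤ card A ∧
        (a = 1 → Even (card A))) := by
  have hs : 1 ≤ A.count a := count_pos.mpr haA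
  have hB1 : A.filter (· ≠ a) = replicate (card (A.filter (· ≠ a))) 1 :=
    eq_replicate_card.mpr fun x hx => (hB x (mem_filter.mp hx).1 (mem_filter.mp hx).2).2
  have hn : card (A.filter (· ≠ a)) = 0 ∨ (p = 2 ∧ a ≠ 1) := by
    refine or_iff_not_imp_left.mpr fun hn => ?_
    obtain ⟨x, hx⟩ := card_pos_iff_exists_mem.mp (Nat.pos_of_ne_zero hn)
    obtain ⟨hxA, hxa⟩ := mem_filter.mp hx
    obtain ⟨hp, rfl⟩ := hB x hxA hxa
    exact ⟨hp, Ne.symm hxa⟩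
  have hA : A = replicate (A.count a) a + replicate (card (A.filter (· ≠ a))) 1 := by
    rw [← hB1, ← Multiset.filter_eq', filter_add_not]
  have hcard : card A = A.count a + card (A.filter (· ≠ a)) := by
    conv_lhs => rw [hA]
    rw [card_add, card_replicate, card_replicate]
  generalize A.count a = s at *
  generalize card (A.filter (· ≠ a)) = n at *
  subst hA
  rw [hcard]
  rcases hn with rfl | ⟨rfl, ha⟩
  · rcases hcount with rfl | ⟨rfl, rfl⟩ | ⟨rfl, k, rfl⟩
    · exact Or.inl (by simp)
    · obtain rfl : a = 1 := by omega
      exact Or.inr (Or.inl ⟨rfl, by simp⟩)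
    · by_cases h2 : k + k = 2
      · exact Or.inl (by simp [h2])
      obtain rfl : a = 1 := by omega
      refine Or.inr (Or.inr ⟨rfl, ?_, by omega, fun _ => ⟨k, by simp⟩⟩)
      rw [add_zero, replicate_zero, add_zero, ← replicate_add, Nat.add_sub_cancel' (by omega)]
  · obtain rfl : s = 2 := by
      rcases hcount with h | ⟨h3, -⟩ | ⟨-, k, rfl⟩ <;> omega
    rcases Nat.eq_zero_or_pos n with rfl | hn
    · exact Or.inl (by simp)
    · exact Or.inr (Or.inr ⟨rfl, by rw [Nat.add_sub_cancel_left], by omega, fun h => absurd h ha⟩)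

lemma count_conditions_of_replicate_shape (haA : a ∈ A)
    (h : A = replicate 2 a ∨ (p = 3 ∧ A = replicate 3 1) ∨
      (p = 2 ∧ A = replicate 2 a + replicate (card A - 2) 1 ∧ 3 ≤ card A ∧
        (a = 1 → Even (card A)))) :
    (∀ x ∈ A, x ≠ a → p = 2 ∧ x = 1) ∧ (a = 1 ∨ A.count a ≤ 2) ∧
      (A.count a = 2 ∨ (p = 3 ∧ A.count a = 3) ∨ (p = 2 ∧ Even (A.count a))) := by
  rcases h with rfl | ⟨rfl, rfl⟩ | ⟨rfl, hA, h3, heven⟩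
  · simp
  · obtain rfl := eq_of_mem_replicate haA
    simp
  · generalize card A = c at hA h3 heven
    subst hA
    by_cases ha : a = 1
    · subst ha
      rw [← replicate_add, Nat.add_sub_cancel' (by omega : 2 ≤ c)]
      simpa [mem_replicate] using Or.inr (heven rfl)
    · simp +contextual [count_replicate, Ne.symm ha, mem_replicate]

end Shape

lemma localFactor_eq_one_iff {p a : ℕ} {A : Multiset ℕ} (hp : p.Prime) (hA : ∀ x ∈ A, 1 ≤ x)
    (ha : 1 ≤ a) (haA : a ∈ A) :
    localFactor p a A = 1 ↔ A = Multiset.replicate 2 a ∨ (p = 3 ∧ A = Multiset.replicate 3 1) ∨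
      (p = 2 ∧ A = Multiset.replicate 2 a + Multiset.replicate (Multiset.card A - 2) 1 ∧
        3 ≤ Multiset.card A ∧ (a = 1 → Even (Multiset.card A))) := by
  rw [localFactor_eq_one_iff_count hp hA ha haA]
  exact ⟨fun ⟨hB, hexp, hcount⟩ => replicate_shape_of_count_conditions haA hB hexp hcount,
    count_conditions_of_replicate_shape haA⟩

lemma mem_posExps {r : ℕ} {m : Fin r → ℕ} {p x : ℕ} :
    x ∈ posExps m p ↔ (∃ j, (m j).factorization p = x) ∧ 1 ≤ x := by
  simp [posExps]

lemma prod_map_posExps {M : Type*} [CommMonoid M] {r : ℕ} (m : Fin r → ℕ) (p : ℕ) {g : ℕ → M}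
    (hg : g 0 = 1) : ((posExps m p).map g).prod = ∏ j, g ((m j).factorization p) := by
  rw [posExps, Multiset.filter_map, Multiset.map_map, ← Finset.filter_val,
    ← Finset.prod_eq_multiset_prod]
  exact prod_filter_of_ne fun j _ h => Nat.one_le_iff_ne_zero.mpr fun h0 => h (by simp [h0, hg])

section PosExps

variable {r : ℕ} {m : Fin r → ℕ}

lemma le_factorization_lcm_of_mem_posExps (hM : univ.lcm m ≠ 0) {p x : ℕ}
    (hx : x ∈ posExps m p) : x ≤ (univ.lcm m).factorization p := by
  obtain ⟨⟨j, rfl⟩, -⟩ := mem_posExps.mp hx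
  exact (Nat.factorization_le_iff_dvd (Finset.lcm_ne_zero_iff.mp hM j (mem_univ j)) hM).mpr
    (dvd_lcm (mem_univ j)) p

lemma factorization_lcm_mem_posExps (hM : univ.lcm m ≠ 0) {p : ℕ}
    (hp : p ∈ (univ.lcm m).primeFactors) : (univ.lcm m).factorization p ∈ posExps m p := by
  have hpos : 0 < (univ.lcm m).factorization p :=
    (Nat.prime_of_mem_primeFactors hp).factorization_pos_of_dvd hM (Nat.dvd_of_mem_primeFactors hp)
  rw [Nat.factorization_finset_lcm fun j _ => Finset.lcm_ne_zero_iff.mp hM j (mem_univ j)] at hpos ⊢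
  rcases (univ : Finset (Fin r)).eq_empty_or_nonempty with h | h
  · simp [h] at hpos
  obtain ⟨j, -, hj⟩ := exists_mem_eq_sup univ h fun j => (m j).factorization p
  exact mem_posExps.mpr ⟨⟨j, hj.symm⟩, hj ▸ hpos⟩

lemma prod_vonSterneck_eq_prod_posExps (hM : univ.lcm m ≠ 0) (k : ℕ) :
    ∏ j, vonSterneck k (m j) =
      ∏ p ∈ (univ.lcm m).primeFactors, ((posExps m p).map fun x => vonSterneck k (p ^ x)).prod := by
  calc ∏ j, vonSterneck k (m j)
      = ∏ j, ∏ p ∈ (univ.lcm m).primeFactors, vonSterneck k (p ^ (m j).factorization p) :=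
        prod_congr rfl fun j _ => vonSterneck_eq_prod_primePow k
          (Finset.lcm_ne_zero_iff.mp hM j (mem_univ j))
          (Nat.primeFactors_mono (dvd_lcm (mem_univ j)) hM)
    _ = _ := by
        rw [prod_comm]
        exact prod_congr rfl fun p _ => (prod_map_posExps m p (g := fun x => vonSterneck k (p ^ x))
          (by simp [vonSterneck_one_right])).symm

lemma sum_range_prod_vonSterneck_eq_prod_localFactor (hM : univ.lcm m ≠ 0) :
    ∑ k ∈ range (univ.lcm m), ∏ j, vonSterneck k (m j) =
      ∏ p ∈ (univ.lcm m).primeFactors, (p ^ (univ.lcm m).factorization p *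
        (p ^ (univ.lcm m).factorization p).totient *
          localFactor p ((univ.lcm m).factorization p) (posExps m p)) := by
  set M := univ.lcm m
  have hP : ∀ p ∈ M.primeFactors, p.Prime := fun p hp => Nat.prime_of_mem_primeFactors hp
  have hcop : (M.primeFactors : Set ℕ).Pairwise (Nat.Coprime on fun p => p ^ M.factorization p) :=
    fun p hp q hq hpq => ((Nat.coprime_primes (hP p hp) (hP q hq)).mpr hpq).pow _ _
  have hper : ∀ p ∈ M.primeFactors, Periodic
      (fun k => ((posExps m p).map fun x => vonSterneck k (p ^ x)).prod) (p ^ M.factorization p) :=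
    fun p _ k => congrArg _ <| Multiset.map_congr rfl fun x hx =>
      vonSterneck_periodic (pow_dvd_pow p (le_factorization_lcm_of_mem_posExps hM hx)) k
  conv_lhs => rw [Nat.prod_primeFactors_pow_factorization hM]
  simp only [prod_vonSterneck_eq_prod_posExps hM]
  rw [sum_range_prod_eq_prod_sum_range_of_periodic _ hcop hper]
  exact prod_congr rfl fun p hp => sum_range_prod_vonSterneck_primePow_eq_localFactor (hP p hp)
    ((hP p hp).factorization_pos_of_dvd hM (Nat.dvd_of_mem_primeFactors hp))
    (fun x hx => le_factorization_lcm_of_mem_posExps hM hx) (factorization_lcm_mem_posExps hM hp)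

theorem orbE_eq_totient_mul_prod_localFactor (hM : univ.lcm m ≠ 0) :
    orbE m = (univ.lcm m).totient * ∏ p ∈ (univ.lcm m).primeFactors,
      localFactor p ((univ.lcm m).factorization p) (posExps m p) := by
  have hper : Periodic (fun k => ∏ j, vonSterneck k (m j)) (univ.lcm m) := fun k =>
    prod_congr rfl fun j _ => vonSterneck_periodic (dvd_lcm (mem_univ j)) k
  have hMprod : ∏ p ∈ (univ.lcm m).primeFactors, (p : ℚ) ^ (univ.lcm m).factorization p =
      univ.lcm m := by
    exact_mod_cast (Nat.prod_primeFactors_pow_factorization hM).symm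
  rw [orbE, hper.sum_Icc_one_eq_sum_range, sum_range_prod_vonSterneck_eq_prod_localFactor hM,
    prod_mul_distrib, prod_mul_distrib, hMprod, totient_eq_prod_primeFactors hM]
  push_cast
  rw [mul_assoc]
  exact mul_div_cancel_left₀ _ (Nat.cast_ne_zero.mpr hM)

end PosExps

theorem orbE_eq_totient_iff_general {r : ℕ} (m : Fin r → ℕ) :
    orbE m = (Nat.totient (Finset.univ.lcm m) : ℚ) ↔
      ∀ p ∈ (Finset.univ.lcm m).primeFactors,
        (posExps m p = Multiset.replicate 2 ((Finset.univ.lcm m).factorization p)) ∨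
        (p = 3 ∧ posExps m p = Multiset.replicate 3 1) ∨
        (p = 2 ∧
          posExps m p =
            Multiset.replicate 2 ((Finset.univ.lcm m).factorization p) +
              Multiset.replicate (Multiset.card (posExps m p) - 2) 1 ∧
          3 ≤ Multiset.card (posExps m p) ∧
          ((Finset.univ.lcm m).factorization p = 1 → Even (Multiset.card (posExps m p)))) := by
  rcases eq_or_ne (univ.lcm m) 0 with hM | hM
  · simp [orbE, hM]
  have hφ : ((univ.lcm m).totient : ℚ) ≠ 0 := by
    exact_mod_cast (Nat.totient_pos.mpr (Nat.pos_of_ne_zero hM)).ne'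
  rw [orbE_eq_totient_mul_prod_localFactor hM, mul_eq_left₀ hφ,
    prod_eq_one_iff_of_zero_or_one_le _ fun p hp => localFactor_eq_zero_or_one_le
      (Nat.prime_of_mem_primeFactors hp) (factorization_lcm_mem_posExps hM hp)]
  refine forall₂_congr fun p hp => ?_
  have haA := factorization_lcm_mem_posExps hM hp
  exact localFactor_eq_one_iff (Nat.prime_of_mem_primeFactors hp)
    (fun x hx => (mem_posExps.mp hx).2) (mem_posExps.mp haA).2 haA

theorem orbE_eq_totient_iff {r : ℕ} (m : Fin r → ℕ) (hm : ∀ j, 0 < m j) :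
    orbE m = (Nat.totient (Finset.univ.lcm m) : ℚ) ↔
      ∀ p ∈ (Finset.univ.lcm m).primeFactors,
        (posExps m p = Multiset.replicate 2 ((Finset.univ.lcm m).factorization p)) ∨
        (p = 3 ∧ posExps m p = Multiset.replicate 3 1) ∨
        (p = 2 ∧
          posExps m p =
            Multiset.replicate 2 ((Finset.univ.lcm m).factorization p) +
              Multiset.replicate (Multiset.card (posExps m p) - 2) 1 ∧
          3 ≤ Multiset.card (posExps m p) ∧
          ((Finset.univ.lcm m).factorization p = 1 → Even (Multiset.card (posExps m p)))) :=
  orbE_eq_totient_iff_general m
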